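/- arXiv:1902.06681 — 2 statements merged into one kernel-verified Lean document; each statement's English description precedes it below -/
import Mathlib

section
/- Let $\mathcal{E}: [0,1] \to \mathbb{R}$ be $C^1$, let $\lambda$ be a regular value of $\mathcal{E}$ with $M_\lambda = \{m_1, \dots, m_k\}$, and let $u: [0,1] \to \mathbb{C}$ be continuous. Then $\lim_{h \downarrow 0} \frac{1}{h} \int_{\{m \in [0,1] : \lambda < \mathcal{E}(m) \leq \lambda + h\}} u(m)\,dm = \sum_{i : \mathcal{E}'(m_i) > 0,\ m_i < 1} \frac{u(m_i)}{|\mathcal{E}'(m_i)|} + \sum_{i : \mathcal{E}'(m_i) < 0,\ m_i > 0} \frac{u(m_i)}{|\mathcal{E}'(m_i)|}$ (coarea-type limit for the density of states in the toy model). -/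
/-!
Near a level point `mᵢ` the shell `{λ < ℰ ≤ λ + h}` is squeezed, for every `ε`, between
half-open intervals of lengths `h / (|ℰ'(mᵢ)| ± ε)` starting at `mᵢ` on the side where `ℰ`
exceeds `λ`; it is empty when that side lies outside `[0,1]`. So its measure is
`h / |ℰ'(mᵢ)| + o(h)`, and since the shell shrinks to `mᵢ`, continuity of `u` gives
`∫ u = (measure) · u(mᵢ) + o(h)` over it. By compactness, for small `h` the whole shell lies in
disjoint neighbourhoods of the finitely many `mᵢ`, where these contributions add up.
-/

open Set MeasureTheory Filter Topology Asymptotics Metric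

def shell (E : ℝ → ℝ) (s : Set ℝ) (a h : ℝ) : Set ℝ := s ∩ E ⁻¹' Ioc a (a + h)

lemma tendsto_of_forall_eventually_mem_Icc {α ι β : Type*} [TopologicalSpace β] [LinearOrder β]
    [OrderTopology β] {l : Filter α} {l' : Filter ι} [l'.NeBot] {f : α → β} {g₁ g₂ : ι → β}
    {b : β} (hg₁ : Tendsto g₁ l' (𝓝 b)) (hg₂ : Tendsto g₂ l' (𝓝 b))
    (hf : ∀ᶠ i in l', ∀ᶠ x in l, f x ∈ Icc (g₁ i) (g₂ i)) : Tendsto f l (𝓝 b) := by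
  refine tendsto_order.2 ⟨fun a ha => ?_, fun a ha => ?_⟩
  · obtain ⟨i, hi, hfi⟩ := ((hg₁.eventually (lt_mem_nhds ha)).and hf).exists
    exact hfi.mono fun x hx => hi.trans_le hx.1
  · obtain ⟨i, hi, hfi⟩ := ((hg₂.eventually (gt_mem_nhds ha)).and hf).exists
    exact hfi.mono fun x hx => hx.2.trans_lt hi

lemma measurableSet_shell {E : ℝ → ℝ} {K : Set ℝ} (hK : IsClosed K) (hE : ContinuousOn E K)
    (a h : ℝ) : MeasurableSet (shell E K a h) := by
  have hIic : ∀ b, MeasurableSet (K ∩ E ⁻¹' Iic b) := fun b =>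
    (hE.preimage_isClosed_of_isClosed hK isClosed_Iic).measurableSet
  convert (hIic (a + h)).diff (hIic a) using 1
  ext x
  simp only [shell, mem_inter_iff, mem_preimage, mem_Ioc, Set.mem_sdiff, mem_Iic, not_and, not_le]
  tauto

lemma eventually_shell_subset {E : ℝ → ℝ} {K U : Set ℝ} {a : ℝ} (hK : IsCompact K)
    (hE : ContinuousOn E K) (hU : IsOpen U) (hKU : ∀ x ∈ K, E x = a → x ∈ U) :
    ∀ᶠ h in 𝓝[>] 0, shell E K a h ⊆ U := by
  have hclosed : IsClosed (E '' (K \ U)) :=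
    ((hK.diff hU).image_of_continuousOn (hE.mono sdiff_subset)).isClosed
  have ha : a ∉ E '' (K \ U) := by
    rintro ⟨x, ⟨hxK, hxU⟩, rfl⟩
    exact hxU (hKU x hxK rfl)
  obtain ⟨η, hη, hball⟩ := Metric.isOpen_iff.1 hclosed.isOpen_compl a ha
  filter_upwards [Ioo_mem_nhdsGT hη] with h hh x ⟨hxK, hxa⟩
  by_contra hxU
  refine hball ?_ ⟨x, ⟨hxK, hxU⟩, rfl⟩
  rw [mem_ball, Real.dist_eq, abs_lt]
  constructor <;> linarith [hxa.1, hxa.2, hh.2]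

lemma tendsto_shell_smallSets {E : ℝ → ℝ} {K : Set ℝ} {m₀ : ℝ} (hK : IsCompact K)
    (hE : ContinuousOn E K) (hinj : ∀ x ∈ K, E x = E m₀ → x = m₀) :
    Tendsto (shell E K (E m₀)) (𝓝[>] 0) (𝓝[K] m₀).smallSets := by
  refine tendsto_smallSets_iff.2 fun W hW => ?_
  obtain ⟨V, hVo, hm₀V, hVW⟩ := mem_nhdsWithin.1 hW
  filter_upwards [eventually_shell_subset hK hE hVo fun x hx hEx => hinj x hx hEx ▸ hm₀V]
    with h hh x hx using hVW ⟨hh hx, hx.1⟩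

lemma tendsto_inv_smul_setIntegral {F : Type*} [NormedAddCommGroup F] [NormedSpace ℝ F]
    [CompleteSpace F] {u : ℝ → F} {t : Set ℝ} {x₀ L : ℝ} {s : ℝ → Set ℝ}
    (hu : ContinuousOn u t) (hx₀ : x₀ ∈ t) (ht : MeasurableSet t)
    (hs : Tendsto s (𝓝[>] 0) (𝓝[t] x₀).smallSets)
    (hvol : Tendsto (fun h => volume.real (s h) / h) (𝓝[>] 0) (𝓝 L)) :
    Tendsto (fun h => h⁻¹ • ∫ x in s h, u x) (𝓝[>] 0) (𝓝 (L • u x₀)) := by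
  have hvolO : (fun h => volume.real (s h)) =O[𝓝[>] 0] id :=
    isBigO_of_div_tendsto_nhds (eventually_mem_nhdsWithin.mono fun h hh h0 =>
      absurd h0 (ne_of_gt hh)) L hvol
  have herr := ((hu.integral_sub_linear_isLittleO_ae hx₀ ht hs).trans_isBigO
    hvolO).tendsto_inv_smul_nhds_zero
  simpa [smul_sub, smul_smul, div_eq_inv_mul] using herr.add (hvol.smul_const (u x₀))

lemma eventually_Ioc_subset_shell_subset_Ioc {E : ℝ → ℝ} {J : Set ℝ} {m₀ c ε : ℝ}
    (hJ : J ∈ 𝓝[≥] m₀) (hmono : StrictMonoOn E J) (hE : HasDerivWithinAt E c J m₀)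
    (hε : 0 < ε) (hεc : ε < c) :
    ∀ᶠ h in 𝓝[>] 0, Ioc m₀ (m₀ + h / (c + ε)) ⊆ shell E J (E m₀) h ∧
      shell E J (E m₀) h ⊆ Ioc m₀ (m₀ + h / (c - ε)) := by
  have hm₀ : m₀ ∈ J := mem_of_mem_nhdsWithin self_mem_Ici hJ
  have htangent : ∀ᶠ x in 𝓝[≥] m₀, x ∈ J ∧ |E x - E m₀ - (x - m₀) * c| ≤ ε * |x - m₀| := by
    filter_upwards [hJ, nhdsWithin_le_of_mem hJ ((hasDerivWithinAt_iff_isLittleO.1 hE).def hε)]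
      with x hxJ hx
    exact ⟨hxJ, by simpa only [Real.norm_eq_abs, smul_eq_mul] using hx⟩
  obtain ⟨p, hmp, hp⟩ := mem_nhdsGE_iff_exists_Icc_subset.1 htangent
  have hbounds : ∀ x ∈ Icc m₀ p, x ∈ J ∧ (c - ε) * (x - m₀) ≤ E x - E m₀ ∧
      E x - E m₀ ≤ (c + ε) * (x - m₀) := by
    intro x hxp
    obtain ⟨hxJ, hx⟩ := hp hxp
    rw [abs_of_nonneg (sub_nonneg.2 hxp.1)] at hx
    obtain ⟨hx₁, hx₂⟩ := abs_le.1 hx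
    exact ⟨hxJ, by nlinarith, by nlinarith⟩
  have hpJ := (hbounds p ⟨hmp.le, le_rfl⟩).1
  have hEp : 0 < E p - E m₀ := sub_pos.2 (hmono hm₀ hpJ hmp)
  have hcε : 0 < c - ε := sub_pos.2 hεc
  filter_upwards [Ioo_mem_nhdsGT (lt_min hEp (mul_pos hcε (sub_pos.2 hmp)))]
    with h ⟨hh, hhp⟩
  constructor
  · rintro x ⟨hmx, hx⟩
    have hxp : x ≤ p := by
      have : h / (c + ε) ≤ h / (c - ε) := div_le_div_of_nonneg_left hh.le hcε (by linarith)
      have : h / (c - ε) < p - m₀ := (div_lt_iff₀' hcε).2 (hhp.trans_le (min_le_right _ _))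
      linarith
    obtain ⟨hxJ, -, hup⟩ := hbounds x ⟨hmx.le, hxp⟩
    have : (x - m₀) * (c + ε) ≤ h := (le_div_iff₀ (by linarith)).1 (by linarith)
    exact ⟨hxJ, hmono hm₀ hxJ hmx, by linarith⟩
  · rintro x ⟨hxJ, hlow, hup⟩
    have hmx : m₀ < x := (hmono.lt_iff_lt hm₀ hxJ).1 hlow
    have hxp : x ≤ p :=
      ((hmono.lt_iff_lt hxJ hpJ).1 (by linarith [min_le_left (E p - E m₀) ((c - ε) * (p - m₀))])).le
    obtain ⟨-, hlo, -⟩ := hbounds x ⟨hmx.le, hxp⟩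
    refine ⟨hmx, ?_⟩
    have : x - m₀ ≤ h / (c - ε) := (le_div_iff₀ hcε).2 (by linarith)
    linarith

lemma tendsto_volume_shell_div_of_strictMonoOn {E : ℝ → ℝ} {J : Set ℝ} {m₀ c : ℝ}
    (hJ : J ∈ 𝓝[≥] m₀) (hmono : StrictMonoOn E J) (hE : HasDerivWithinAt E c J m₀)
    (hc : 0 < c) :
    Tendsto (fun h => volume.real (shell E J (E m₀) h) / h) (𝓝[>] 0) (𝓝 c⁻¹) := by
  have hinv : ∀ σ : ℝ, Tendsto (fun ε => (c + σ * ε)⁻¹) (𝓝[>] 0) (𝓝 c⁻¹) := fun σ => by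
    have : ContinuousAt (fun ε => (c + σ * ε)⁻¹) 0 := by fun_prop (disch := simpa using hc.ne')
    simpa using this.tendsto.mono_left nhdsWithin_le_nhds
  refine tendsto_of_forall_eventually_mem_Icc (hinv 1) (hinv (-1)) ?_
  filter_upwards [Ioo_mem_nhdsGT hc] with ε ⟨hε, hεc⟩
  filter_upwards [eventually_Ioc_subset_shell_subset_Ioc hJ hmono hE hε hεc,
    self_mem_nhdsWithin] with h ⟨hlow, hup⟩ (hh : 0 < h)
  have hfin : volume (Ioc m₀ (m₀ + h / (c - ε))) ≠ ⊤ := measure_Ioc_lt_top.ne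
  have hvol_low := measureReal_mono hlow ((measure_mono hup).trans_lt hfin.lt_top).ne
  have hvol_up := measureReal_mono hup hfin
  rw [Real.volume_real_Ioc_of_le (by have := div_pos hh (show 0 < c + ε by linarith); linarith),
    add_sub_cancel_left] at hvol_low
  rw [Real.volume_real_Ioc_of_le (by have := div_pos hh (show 0 < c - ε by linarith); linarith),
    add_sub_cancel_left] at hvol_up
  constructor
  · rw [le_div_iff₀ hh, one_mul, ← div_eq_inv_mul]; exact hvol_low
  · rw [div_le_iff₀ hh, neg_one_mul, ← sub_eq_add_neg, ← div_eq_inv_mul]; exact hvol_up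

lemma shell_comp_neg (E : ℝ → ℝ) (J : Set ℝ) (a h : ℝ) :
    shell (fun x => E (-x)) (-J) a h = -shell E J a h := by
  ext x
  simp [shell]

lemma tendsto_volume_shell_div_of_strictAntiOn {E : ℝ → ℝ} {J : Set ℝ} {m₀ c : ℝ}
    (hJ : J ∈ 𝓝[≤] m₀) (hanti : StrictAntiOn E J) (hE : HasDerivWithinAt E c J m₀)
    (hc : c < 0) :
    Tendsto (fun h => volume.real (shell E J (E m₀) h) / h) (𝓝[>] 0) (𝓝 (-c)⁻¹) := by
  have hJneg : -J ∈ 𝓝[≥] (-m₀) := by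
    obtain ⟨p, hpm, hp⟩ := mem_nhdsLE_iff_exists_Icc_subset.1 hJ
    refine mem_nhdsGE_iff_exists_Icc_subset.2 ⟨-p, neg_lt_neg hpm, ?_⟩
    intro x hx
    exact hp ⟨by linarith [hx.2], by linarith [hx.1]⟩
  have hmono : StrictMonoOn (fun x => E (-x)) (-J) := fun x hx y hy hxy =>
    hanti hy hx (neg_lt_neg hxy)
  have hEneg : HasDerivWithinAt (fun x => E (-x)) (-c) (-J) (-m₀) := by
    have := HasDerivWithinAt.comp (-m₀) (by rwa [neg_neg]) (hasDerivWithinAt_neg (-m₀) (-J))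
      (fun x hx => hx)
    rw [mul_neg_one] at this
    exact this
  have := tendsto_volume_shell_div_of_strictMonoOn hJneg hmono hEneg (neg_pos.2 hc)
  simpa [shell_comp_neg, Measure.real, Measure.measure_neg] using this

lemma strictMonoOn_or_strictAntiOn_of_sign {E E' : ℝ → ℝ} {J : Set ℝ} {m₀ : ℝ}
    (hJ : Convex ℝ J) (hm₀ : m₀ ∈ J) (hderiv : ∀ x ∈ J, HasDerivWithinAt E (E' x) J x)
    (hsign : ∀ x ∈ J, 0 < E' m₀ * E' x) :
    (0 < E' m₀ ∧ StrictMonoOn E J) ∨ (E' m₀ < 0 ∧ StrictAntiOn E J) := by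
  have hcont : ContinuousOn E J := fun x hx => (hderiv x hx).continuousWithinAt
  have hint : ∀ x ∈ interior J, HasDerivWithinAt E (E' x) (interior J) x := fun x hx =>
    (hderiv x (interior_subset hx)).mono interior_subset
  rcases (mul_self_pos.1 (hsign m₀ hm₀)).lt_or_gt with hneg | hpos
  · exact .inr ⟨hneg, strictAntiOn_of_hasDerivWithinAt_neg hJ hcont hint fun x hx =>
      neg_of_mul_pos_right (hsign x (interior_subset hx)) hneg.le⟩
  · exact .inl ⟨hpos, strictMonoOn_of_hasDerivWithinAt_pos hJ hcont hint fun x hx =>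
      pos_of_mul_pos_right (hsign x (interior_subset hx)) hpos.le⟩

-- At `m = 1` with `E' m > 0`, or `m = 0` with `E' m < 0`, the shell near `m` lies outside `[0,1]`.
noncomputable def levelWeight (E' : ℝ → ℝ) (m : ℝ) : ℝ :=
  if (0 < E' m ∧ m < 1) ∨ (E' m < 0 ∧ 0 < m) then |E' m|⁻¹ else 0

section UnitInterval

variable {E E' : ℝ → ℝ} {m₀ d : ℝ}

lemma tendsto_volume_shell_div_levelWeight
    (hdiff : ∀ m ∈ Icc (0 : ℝ) 1, HasDerivWithinAt E (E' m) (Icc (0 : ℝ) 1) m)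
    (hm₀ : m₀ ∈ Icc (0 : ℝ) 1) (hd : 0 < d)
    (hsign : ∀ x ∈ Icc (0 : ℝ) 1 ∩ closedBall m₀ d, 0 < E' m₀ * E' x) :
    Tendsto (fun h => volume.real (shell E (Icc 0 1 ∩ closedBall m₀ d) (E m₀) h) / h)
      (𝓝[>] 0) (𝓝 (levelWeight E' m₀)) := by
  set J := Icc (0 : ℝ) 1 ∩ closedBall m₀ d
  have hm₀J : m₀ ∈ J := ⟨hm₀, mem_closedBall_self hd.le⟩
  have hball : closedBall m₀ d ∈ 𝓝 m₀ := closedBall_mem_nhds m₀ hd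
  have hderiv : ∀ x ∈ J, HasDerivWithinAt E (E' x) J x := fun x hx =>
    (hdiff x hx.1).mono inter_subset_left
  have hempty : ∀ h, (∀ x ∈ J, E m₀ < E x → False) →
      volume.real (shell E J (E m₀) h) / h = 0 := fun h hJ => by
    rw [show shell E J (E m₀) h = ∅ from eq_empty_of_forall_notMem fun x hx =>
      hJ x hx.1 hx.2.1]
    simp
  rcases strictMonoOn_or_strictAntiOn_of_sign ((convex_Icc 0 1).inter (convex_closedBall m₀ d))
    hm₀J hderiv hsign with ⟨hpos, hmono⟩ | ⟨hneg, hanti⟩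
  · rcases hm₀.2.lt_or_eq with hlt | rfl
    · have hw : levelWeight E' m₀ = (E' m₀)⁻¹ := by
        simp [levelWeight, hpos, hlt, abs_of_pos hpos]
      rw [hw]
      exact tendsto_volume_shell_div_of_strictMonoOn
        (inter_mem (Icc_mem_nhdsGE_of_mem ⟨hm₀.1, hlt⟩) (mem_nhdsWithin_of_mem_nhds hball))
        hmono (hderiv m₀ hm₀J) hpos
    · have hw : levelWeight E' 1 = 0 := by simp [levelWeight, hpos.not_gt]
      rw [hw]
      refine tendsto_const_nhds.congr fun h => (hempty h fun x hx hx1 => ?_).symm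
      exact ((hmono.lt_iff_lt hm₀J hx).1 hx1).not_ge hx.1.2
  · rcases hm₀.1.eq_or_lt with rfl | hlt
    · have hw : levelWeight E' 0 = 0 := by simp [levelWeight, hneg.not_gt]
      rw [hw]
      refine tendsto_const_nhds.congr fun h => (hempty h fun x hx hx1 => ?_).symm
      exact ((hanti.lt_iff_gt hm₀J hx).1 hx1).not_ge hx.1.1
    · have hw : levelWeight E' m₀ = (-E' m₀)⁻¹ := by
        simp [levelWeight, hneg, hlt, abs_of_neg hneg]
      rw [hw]
      exact tendsto_volume_shell_div_of_strictAntiOn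
        (inter_mem (Icc_mem_nhdsLE_of_mem ⟨hlt, hm₀.2⟩) (mem_nhdsWithin_of_mem_nhds hball))
        hanti (hderiv m₀ hm₀J) hneg

lemma tendsto_inv_smul_integral_shell {F : Type*} [NormedAddCommGroup F] [NormedSpace ℝ F]
    [CompleteSpace F] {u : ℝ → F}
    (hdiff : ∀ m ∈ Icc (0 : ℝ) 1, HasDerivWithinAt E (E' m) (Icc (0 : ℝ) 1) m)
    (hu : ContinuousOn u (Icc (0 : ℝ) 1)) (hm₀ : m₀ ∈ Icc (0 : ℝ) 1) (hd : 0 < d)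
    (hsign : ∀ x ∈ Icc (0 : ℝ) 1 ∩ closedBall m₀ d, 0 < E' m₀ * E' x) :
    Tendsto (fun h => h⁻¹ • ∫ x in shell E (Icc 0 1 ∩ closedBall m₀ d) (E m₀) h, u x)
      (𝓝[>] 0) (𝓝 (levelWeight E' m₀ • u m₀)) := by
  set J := Icc (0 : ℝ) 1 ∩ closedBall m₀ d
  have hm₀J : m₀ ∈ J := ⟨hm₀, mem_closedBall_self hd.le⟩
  have hJ : IsCompact J := isCompact_Icc.inter_right isClosed_closedBall
  have hderiv : ∀ x ∈ J, HasDerivWithinAt E (E' x) J x := fun x hx =>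
    (hdiff x hx.1).mono inter_subset_left
  have hinj : InjOn E J := by
    rcases strictMonoOn_or_strictAntiOn_of_sign ((convex_Icc 0 1).inter (convex_closedBall m₀ d))
      hm₀J hderiv hsign with ⟨-, hmono⟩ | ⟨-, hanti⟩
    exacts [hmono.injOn, hanti.injOn]
  exact tendsto_inv_smul_setIntegral (hu.mono inter_subset_left) hm₀J hJ.measurableSet
    (tendsto_shell_smallSets hJ (fun x hx => (hderiv x hx).continuousWithinAt)
      fun x hx hEx => hinj hx hm₀J hEx)
    (tendsto_volume_shell_div_levelWeight hdiff hm₀ hd hsign)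

end UnitInterval

lemma exists_radius_sign_pairwiseDisjoint {E' : ℝ → ℝ} {s : Set ℝ} (M : Finset ℝ)
    (hcont : ∀ m ∈ M, ContinuousWithinAt E' s m) (hne : ∀ m ∈ M, E' m ≠ 0) :
    ∃ d > 0, (M : Set ℝ).PairwiseDisjoint (fun m => closedBall m d) ∧
      ∀ m ∈ M, ∀ x ∈ s ∩ closedBall m d, 0 < E' m * E' x := by
  have hdisj : ∀ m ∈ M, ∀ m' ∈ M, ∀ᶠ d in 𝓝[>] (0 : ℝ),
      m ≠ m' → Disjoint (closedBall m d) (closedBall m' d) := by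
    intro m _ m' _
    rcases eq_or_ne m m' with rfl | hmm'
    · exact .of_forall fun _ h => absurd rfl h
    filter_upwards [Ioo_mem_nhdsGT (half_pos (dist_pos.2 hmm'))] with d hd _
    exact closedBall_disjoint_closedBall (by linarith [hd.2])
  have hsign : ∀ m ∈ M, ∀ᶠ d in 𝓝[>] (0 : ℝ), ∀ x ∈ s ∩ closedBall m d, 0 < E' m * E' x := by
    intro m hm
    obtain ⟨ε, hε, hball⟩ := Metric.mem_nhdsWithin_iff.1 <|
      (continuousWithinAt_const.mul (hcont m hm)).eventually
        (lt_mem_nhds (mul_self_pos.2 (hne m hm)))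
    filter_upwards [Ioo_mem_nhdsGT hε] with d hd x hx
    exact hball ⟨closedBall_subset_ball hd.2 hx.2, hx.1⟩
  obtain ⟨d, hd, hdisj, hsign⟩ := (eventually_mem_nhdsWithin.and <|
    ((eventually_all_finset M).2 fun m hm => (eventually_all_finset M).2 (hdisj m hm)).and
      ((eventually_all_finset M).2 hsign)).exists
  exact ⟨d, hd, fun m hm m' hm' => hdisj m hm m' hm', hsign⟩

lemma eventually_integral_shell_eq_sum {F : Type*} [NormedAddCommGroup F] [NormedSpace ℝ F]
    {E : ℝ → ℝ} {u : ℝ → F} {K : Set ℝ} {a d : ℝ} (M : Finset ℝ) (hK : IsCompact K)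
    (hE : ContinuousOn E K) (hu : ContinuousOn u K) (hd : 0 < d)
    (hdisj : (M : Set ℝ).PairwiseDisjoint fun m => closedBall m d)
    (hM : ∀ x ∈ K, E x = a → x ∈ M) :
    ∀ᶠ h in 𝓝[>] 0, ∫ x in shell E K a h, u x =
      ∑ m ∈ M, ∫ x in shell E (K ∩ closedBall m d) a h, u x := by
  filter_upwards [eventually_shell_subset hK hE (isOpen_biUnion fun m _ => isOpen_ball)
    fun x hx hEx => mem_biUnion (hM x hx hEx) (mem_ball_self hd)] with h hcover
  have hunion : shell E K a h = ⋃ m ∈ M, shell E (K ∩ closedBall m d) a h := by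
    refine Subset.antisymm (fun x hx => ?_) (iUnion₂_subset fun m _ x hx => ⟨hx.1.1, hx.2⟩)
    obtain ⟨m, hm, hxm⟩ := mem_iUnion₂.1 (hcover hx)
    exact mem_biUnion hm ⟨⟨hx.1, ball_subset_closedBall hxm⟩, hx.2⟩
  rw [hunion]
  exact integral_biUnion_finset M
    (fun m _ => measurableSet_shell (hK.isClosed.inter isClosed_closedBall)
      (hE.mono inter_subset_left) _ _)
    (hdisj.mono fun m x hx => hx.1.2)
    (fun m _ => (hu.integrableOn_compact hK).mono_set fun x hx => hx.1.1)

lemma levelWeight_smul (E' : ℝ → ℝ) (m : ℝ) (z : ℂ) :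
    levelWeight E' m • z = (if 0 < E' m ∧ m < 1 then z / ((|E' m| : ℝ) : ℂ) else 0) +
      (if E' m < 0 ∧ 0 < m then z / ((|E' m| : ℝ) : ℂ) else 0) := by
  rw [levelWeight, Complex.real_smul]
  by_cases h₁ : 0 < E' m ∧ m < 1 <;> by_cases h₂ : E' m < 0 ∧ 0 < m
  · linarith [h₁.1, h₂.1]
  all_goals simp [h₁, h₂, div_eq_inv_mul]

/-- coarea-type limit for the density of states in the toy model.
If `λ` is a regular value of the `C¹` function `ℰ : [0,1] → ℝ` with level set
`M_λ = {m₁,…,m_k}` and `u` is continuous, then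
`(1/h) ∫_{{λ < ℰ ≤ λ+h}} u → ∑_{ℰ'(mᵢ)>0, mᵢ<1} u(mᵢ)/|ℰ'(mᵢ)| + ∑_{ℰ'(mᵢ)<0, mᵢ>0} u(mᵢ)/|ℰ'(mᵢ)|`
as `h ↓ 0`. -/
theorem stmt3 (E E' : ℝ → ℝ) (lam : ℝ) (u : ℝ → ℂ)
    (hdiff : ∀ m ∈ Icc (0 : ℝ) 1, HasDerivWithinAt E (E' m) (Icc (0 : ℝ) 1) m)
    (hE'cont : ContinuousOn E' (Icc (0 : ℝ) 1))
    (hreg : ∀ m ∈ Icc (0 : ℝ) 1, E m = lam → E' m ≠ 0)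
    (hu : ContinuousOn u (Icc (0 : ℝ) 1))
    (M : Finset ℝ) (hM : ∀ m : ℝ, m ∈ M ↔ m ∈ Icc (0 : ℝ) 1 ∧ E m = lam) :
    Tendsto
      (fun h : ℝ =>
        (1 / h) * ∫ m in {m ∈ Icc (0 : ℝ) 1 | lam < E m ∧ E m ≤ lam + h}, u m)
      (nhdsWithin 0 (Ioi 0))
      (nhds
        ((∑ m ∈ M.filter (fun m => 0 < E' m ∧ m < 1), u m / ((|E' m| : ℝ) : ℂ)) +
          ∑ m ∈ M.filter (fun m => E' m < 0 ∧ 0 < m), u m / ((|E' m| : ℝ) : ℂ))) := by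
  have hE : ContinuousOn E (Icc 0 1) := fun m hm => (hdiff m hm).continuousWithinAt
  obtain ⟨d, hd, hdisj, hsign⟩ := exists_radius_sign_pairwiseDisjoint M
    (fun m hm => hE'cont m ((hM m).1 hm).1) fun m hm => hreg m ((hM m).1 hm).1 ((hM m).1 hm).2
  have hlocal : ∀ m ∈ M, Tendsto
      (fun h : ℝ => h⁻¹ • ∫ x in shell E (Icc 0 1 ∩ closedBall m d) lam h, u x)
      (𝓝[>] 0) (𝓝 (levelWeight E' m • u m)) := fun m hm => by
    obtain ⟨hm01, hEm⟩ := (hM m).1 hm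
    simpa only [hEm] using tendsto_inv_smul_integral_shell hdiff hu hm01 hd (hsign m hm)
  have hsplit := eventually_integral_shell_eq_sum M isCompact_Icc hE hu hd hdisj
    fun x hx hEx => (hM x).2 ⟨hx, hEx⟩
  rw [Finset.sum_filter, Finset.sum_filter, ← Finset.sum_add_distrib]
  simp only [← levelWeight_smul]
  refine (tendsto_finsetSum M hlocal).congr' ?_
  filter_upwards [hsplit] with h hh
  rw [← Finset.smul_sum, ← hh, Complex.real_smul, Complex.ofReal_inv, one_div]
  rfl
end

section
/- Let $\alpha > 0$, $s > 1/2$, $\gamma \geq 0$ with $\gamma + s/\alpha > 1/2$, and $\lambda > 0$. Suppose $f, g \in \dot{\mathcal{H}}^{s,\gamma}_0$ with fiberwise Fourier coefficients satisfying $|\hat{f}_m(k)| \leq \|f\|_{s,\gamma} C |k|^{-\gamma} m^{s-1/2}$ (and similarly for $g$). Then the limit $D(\lambda) := \sum_{k \geq \max(1,\lfloor\lambda\rfloor)} \frac{1}{\alpha k}\left(\frac{\lambda}{k}\right)^{1/\alpha - 1} \hat{f}_{(\lambda/k)^{1/\alpha}}(k)\, \overline{\hat{g}_{(\lambda/k)^{1/\alpha}}(k)}$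 converges absolutely and satisfies $|D(\lambda)| \leq C' \lambda^{2s/\alpha - 1} \|f\|_{s,\gamma} \|g\|_{s,\gamma}$ with $C'$ independent of $f$, $g$, $\lambda$. -/
open Set MeasureTheory AddCircle ComplexConjugate

/-- The homogeneous Sobolev norm `‖g‖_{Ḣ^γ}` of a function on the circle. -/
noncomputable def HgammaNorm (γ : ℝ) (g : AddCircle (1 : ℝ) → ℂ) : ℝ :=
  Real.sqrt (∑' k : ℤ, |(k : ℝ)| ^ (2 * γ) * ‖fourierCoeff g k‖ ^ 2)

/-- The norm of `Ḣ^{s,γ} = W^{s,2}([0,1]; Ḣ^γ)`. -/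
noncomputable def HsGammaNorm (s γ : ℝ) (f : ℝ → AddCircle (1 : ℝ) → ℂ) : ℝ :=
  Real.sqrt ((∫ m in Icc (0 : ℝ) 1, (HgammaNorm γ (f m)) ^ 2) +
    ∫ p in Icc (0 : ℝ) 1 ×ˢ Icc (0 : ℝ) 1,
      (HgammaNorm γ (fun θ => f p.1 θ - f p.2 θ)) ^ 2 / |p.1 - p.2| ^ (1 + 2 * s))

/-- The `k`-th term of the density of states sum
`D(λ) = ∑_{k ≥ max(1,⌊λ⌋)} (1/(αk))(λ/k)^{1/α-1} f̂_{(λ/k)^{1/α}}(k) \overline{ĝ_{(λ/k)^{1/α}}(k)}`. -/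
noncomputable def DoSterm (α lam : ℝ) (f g : ℝ → AddCircle (1 : ℝ) → ℂ)
    (k : ℕ) : ℂ :=
  ((1 / (α * k) * (lam / k) ^ (1 / α - 1) : ℝ) : ℂ) *
    fourierCoeff (f ((lam / k) ^ (1 / α))) (k : ℤ) *
    conj (fourierCoeff (g ((lam / k) ^ (1 / α))) (k : ℤ))

private lemma pow_calc (α s γ L x : ℝ) (hα : 0 < α) (hL : 0 < L) (hx : 0 < x) :
    1 / (α * x) * (L / x) ^ (1 / α - 1) *
      (x ^ (-γ) * ((L / x) ^ (1 / α)) ^ (s - 1 / 2)) *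
      (x ^ (-γ) * ((L / x) ^ (1 / α)) ^ (s - 1 / 2)) =
    1 / α * L ^ (2 * s / α - 1) * x ^ (-(2 * γ + 2 * s / α)) := by
  have hLx : (0:ℝ) < L / x := div_pos hL hx
  have h1 : ((L / x) ^ (1 / α)) ^ (s - 1 / 2) = (L / x) ^ (1 / α * (s - 1 / 2)) :=
    (Real.rpow_mul hLx.le _ _).symm
  have h2 : (L / x) ^ (1 / α - 1) *
      ((L / x) ^ (1 / α * (s - 1 / 2)) * (L / x) ^ (1 / α * (s - 1 / 2))) =
      (L / x) ^ (2 * s / α - 1) := by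
    rw [← Real.rpow_add hLx, ← Real.rpow_add hLx]
    congr 1
    field_simp
    ring
  have h3 : (L / x) ^ (2 * s / α - 1) = L ^ (2 * s / α - 1) * x ^ (-(2 * s / α - 1)) := by
    rw [Real.rpow_neg hx.le, Real.div_rpow hL.le hx.le, div_eq_mul_inv]
  have h4 : x ^ (-(2 * s / α - 1)) * (x⁻¹ * (x ^ (-γ) * x ^ (-γ))) =
      x ^ (-(2 * γ + 2 * s / α)) := by
    rw [← Real.rpow_neg_one x, ← Real.rpow_add hx, ← Real.rpow_add hx, ← Real.rpow_add hx]
    congr 1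
    ring
  have hfac : 1 / (α * x) = 1 / α * x⁻¹ := by field_simp
  calc 1 / (α * x) * (L / x) ^ (1 / α - 1) *
      (x ^ (-γ) * ((L / x) ^ (1 / α)) ^ (s - 1 / 2)) *
      (x ^ (-γ) * ((L / x) ^ (1 / α)) ^ (s - 1 / 2))
      = 1 / α * ((L / x) ^ (1 / α - 1) *
          ((L / x) ^ (1 / α * (s - 1 / 2)) * (L / x) ^ (1 / α * (s - 1 / 2)))) *
          (x⁻¹ * (x ^ (-γ) * x ^ (-γ))) := by rw [h1, hfac]; ring
    _ = 1 / α * (L ^ (2 * s / α - 1) * x ^ (-(2 * s / α - 1))) *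
          (x⁻¹ * (x ^ (-γ) * x ^ (-γ))) := by rw [h2, h3]
    _ = 1 / α * L ^ (2 * s / α - 1) *
          (x ^ (-(2 * s / α - 1)) * (x⁻¹ * (x ^ (-γ) * x ^ (-γ)))) := by ring
    _ = 1 / α * L ^ (2 * s / α - 1) * x ^ (-(2 * γ + 2 * s / α)) := by rw [h4]

/-- the density of states `D(λ)` of the degenerate flow converges
absolutely and satisfies `|D(λ)| ≤ C' λ^{2s/α-1} ‖f‖_{s,γ} ‖g‖_{s,γ}`, provided
`γ + s/α > 1/2` and `f, g ∈ Ḣ^{s,γ}₀` obey the Fourier-coefficient decay bound. -/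
theorem stmt18 (α s γ C : ℝ) (hα : 0 < α) (hs : 1 / 2 < s) (hγ : 0 ≤ γ)
    (hconstr : 1 / 2 < γ + s / α) (hC : 0 < C) :
    ∃ C' : ℝ, 0 < C' ∧
      ∀ lam : ℝ, 0 < lam → ∀ f g : ℝ → AddCircle (1 : ℝ) → ℂ,
        (∀ m : ℝ, 0 ≤ m → ∀ k : ℤ, k ≠ 0 →
          ‖fourierCoeff (f m) k‖ ≤
            C * HsGammaNorm s γ f * |(k : ℝ)| ^ (-γ) * m ^ (s - 1 / 2)) →
        (∀ m : ℝ, 0 ≤ m → ∀ k : ℤ, k ≠ 0 →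
          ‖fourierCoeff (g m) k‖ ≤
            C * HsGammaNorm s γ g * |(k : ℝ)| ^ (-γ) * m ^ (s - 1 / 2)) →
        Summable (fun n : ℕ =>
          ‖DoSterm α lam f g (max 1 (Int.toNat ⌊lam⌋) + n)‖) ∧
        ‖∑' n : ℕ, DoSterm α lam f g (max 1 (Int.toNat ⌊lam⌋) + n)‖ ≤
          C' * lam ^ (2 * s / α - 1) * HsGammaNorm s γ f * HsGammaNorm s γ g := by
  set p : ℝ := 2 * γ + 2 * s / α with hp_def
  have hp1 : 1 < p := by
    have h2 : 2 * s / α = 2 * (s / α) := by ring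
    simp only [hp_def, h2]
    linarith
  -- summability of the model series
  have hsum0 : Summable (fun n : ℕ => ((n : ℝ)) ^ (-p)) := by
    rw [Real.summable_nat_rpow]
    linarith
  have hsum1 : Summable (fun n : ℕ => ((1 + n : ℕ) : ℝ) ^ (-p)) :=
    hsum0.comp_injective (add_right_injective 1)
  set Z : ℝ := ∑' n : ℕ, ((1 + n : ℕ) : ℝ) ^ (-p) with hZ_def
  have hZpos : 0 < Z := by
    refine Summable.tsum_pos hsum1 (fun n => Real.rpow_nonneg (by positivity) _) 0 ?_
    norm_num
  refine ⟨C ^ 2 / α * Z, by positivity, ?_⟩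
  intro lam hlam f g hf hg
  set Nf := HsGammaNorm s γ f with hNf_def
  set Ng := HsGammaNorm s γ g with hNg_def
  have hNf0 : 0 ≤ Nf := Real.sqrt_nonneg _
  have hNg0 : 0 ≤ Ng := Real.sqrt_nonneg _
  set K := max 1 (Int.toNat ⌊lam⌋) with hK_def
  have hK1 : 1 ≤ K := le_max_left _ _
  set B : ℝ := C ^ 2 * Nf * Ng * (1 / α * lam ^ (2 * s / α - 1)) with hB_def
  have hB0 : 0 ≤ B := by positivity
  -- the key pointwise bound
  have key : ∀ n : ℕ, ‖DoSterm α lam f g (K + n)‖ ≤ B * ((1 + n : ℕ) : ℝ) ^ (-p) := by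
    intro n
    set k : ℕ := K + n with hk_def
    have hk1 : 1 ≤ k := le_trans hK1 (Nat.le_add_right _ _)
    have hx1 : (1 : ℝ) ≤ (k : ℝ) := by exact_mod_cast hk1
    have hx : (0 : ℝ) < (k : ℝ) := lt_of_lt_of_le one_pos hx1
    have hkZ : ((k : ℤ) : ℤ) ≠ 0 := by
      exact_mod_cast Nat.one_le_iff_ne_zero.mp hk1
    set m : ℝ := (lam / k) ^ (1 / α) with hm_def
    have hm0 : 0 ≤ m := Real.rpow_nonneg (by positivity) _
    have hr0 : 0 ≤ 1 / (α * k) * (lam / k) ^ (1 / α - 1) := by positivity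
    have hnorm : ‖DoSterm α lam f g k‖ =
        (1 / (α * k) * (lam / k) ^ (1 / α - 1)) *
          ‖fourierCoeff (f m) (k : ℤ)‖ * ‖fourierCoeff (g m) (k : ℤ)‖ := by
      simp only [DoSterm, norm_mul, Complex.norm_real, RCLike.norm_conj, hm_def]
      rw [Real.norm_of_nonneg (by positivity),
        Real.norm_of_nonneg (Real.rpow_nonneg (by positivity) _)]
    have habs : |((k : ℤ) : ℝ)| = (k : ℝ) := by
      push_cast
      exact abs_of_nonneg hx.le
    have hfb := hf m hm0 (k : ℤ) hkZ
    have hgb := hg m hm0 (k : ℤ) hkZ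
    rw [habs] at hfb hgb
    rw [hnorm]
    calc (1 / (α * k) * (lam / k) ^ (1 / α - 1)) *
          ‖fourierCoeff (f m) (k : ℤ)‖ * ‖fourierCoeff (g m) (k : ℤ)‖
        ≤ (1 / (α * k) * (lam / k) ^ (1 / α - 1)) *
            (C * Nf * (k : ℝ) ^ (-γ) * m ^ (s - 1 / 2)) *
            (C * Ng * (k : ℝ) ^ (-γ) * m ^ (s - 1 / 2)) := by
          gcongr
      _ = C ^ 2 * Nf * Ng *
            (1 / (α * k) * (lam / k) ^ (1 / α - 1) *
              ((k : ℝ) ^ (-γ) * ((lam / k) ^ (1 / α)) ^ (s - 1 / 2)) *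
              ((k : ℝ) ^ (-γ) * ((lam / k) ^ (1 / α)) ^ (s - 1 / 2))) := by
          rw [hm_def]; ring
      _ = C ^ 2 * Nf * Ng *
            (1 / α * lam ^ (2 * s / α - 1) * (k : ℝ) ^ (-p)) := by
          rw [pow_calc α s γ lam (k : ℝ) hα hlam hx]
      _ = B * (k : ℝ) ^ (-p) := by rw [hB_def]; ring
      _ ≤ B * ((1 + n : ℕ) : ℝ) ^ (-p) := by
          apply mul_le_mul_of_nonneg_left _ hB0
          apply Real.rpow_le_rpow_of_nonpos (by positivity)
          · exact_mod_cast Nat.add_le_add_right hK1 n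
          · linarith
  have hsummand : Summable (fun n : ℕ => B * ((1 + n : ℕ) : ℝ) ^ (-p)) :=
    hsum1.mul_left B
  have hsum : Summable (fun n : ℕ => ‖DoSterm α lam f g (K + n)‖) :=
    Summable.of_nonneg_of_le (fun n => norm_nonneg _) key hsummand
  refine ⟨hsum, ?_⟩
  calc ‖∑' n : ℕ, DoSterm α lam f g (K + n)‖
      ≤ ∑' n : ℕ, ‖DoSterm α lam f g (K + n)‖ :=
        norm_tsum_le_tsum_norm hsum
    _ ≤ ∑' n : ℕ, B * ((1 + n : ℕ) : ℝ) ^ (-p) :=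
        Summable.tsum_le_tsum key hsum hsummand
    _ = B * Z := by rw [tsum_mul_left]
    _ = C ^ 2 / α * Z * lam ^ (2 * s / α - 1) * Nf * Ng := by
        rw [hB_def]; ring
end
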